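/- arXiv:quant-ph/9705002 — 2 statements merged into one kernel-verified Lean document; each statement's English description precedes it below -/
import Mathlib

section
/- Let X be a finite set of cardinality N and F : X → Y two-to-one. If K is a uniformly random subset of X of cardinality k, then the probability that K contains no collision (F is injective on K) is at most ∏_{i=0}^{k−1} (1 − i/(N−i)) ≤ (1 − (k−1)/(2N))^{k−1}. -/
open Finset
open scoped Nat

/-!
Let `m = N / 2` be the number of fibres and `c_j` the number of collision-free `j`-sets.
Double counting the pairs `K' ⊆ K` of collision-free sets of sizes `j` and `j + 1` gives
`(j + 1) c_{j+1} ≤ (N - 2j) c_j`, since `K'` can only be extended by a point outside the `2j`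
points of its own fibres. Hence `k! c_k ≤ 2^k m (m - 1) ⋯ (m - k + 1)`, and dividing by
`k! (N choose k) = N (N - 1) ⋯ (N - k + 1)` gives `∏ (N - 2i) / (N - i)`.
For the second bound, each factor is at most `1 - i / N`, and pairing `i` with `k - 1 - i`
(AM-GM) bounds `∏ (1 - i / N)` by `(1 - (k - 1) / (2N))^k`.
-/

section Fibers

variable {X Y : Type*} [Fintype X] [DecidableEq Y] {F : X → Y} {d : ℕ}

def HasFiberCard (F : X → Y) (d : ℕ) : Prop :=
  ∀ y ∈ univ.image F, #{x | F x = y} = d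

def collisionFree [DecidableEq X] (F : X → Y) (k : ℕ) : Finset (Finset X) :=
  {K ∈ univ.powersetCard k | Set.InjOn F K}

lemma card_filter_mem_eq_mul (hF : HasFiberCard F d) {s : Finset Y}
    (hs : s ⊆ univ.image F) : #{x | F x ∈ s} = d * #s := by
  rw [← sum_card_fiberwise_eq_card_filter, sum_const_nat fun y hy => hF y (hs hy), mul_comm]

lemma card_eq_mul_card_image (hF : HasFiberCard F d) :
    Fintype.card X = d * #(univ.image F) := by
  rw [← card_filter_mem_eq_mul hF subset_rfl,
    filter_true_of_mem fun x _ => mem_image_of_mem F (mem_univ x), card_univ]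

lemma card_filter_notMem_image [DecidableEq X] (hF : HasFiberCard F d) {K : Finset X}
    (hK : Set.InjOn F K) : #{x | F x ∉ K.image F} = d * (#(univ.image F) - #K) := by
  have hsub : K.image F ⊆ univ.image F := image_subset_image (subset_univ K)
  rw [← card_image_of_injOn hK, ← card_sdiff_of_subset hsub,
    ← card_filter_mem_eq_mul hF sdiff_subset]
  congr 1
  ext x
  simp

lemma card_collisionFree_succ_mul_le [DecidableEq X] (hF : HasFiberCard F d) (j : ℕ) :
    #(collisionFree F (j + 1)) * (j + 1) ≤
      #(collisionFree F j) * (d * (#(univ.image F) - j)) := by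
  refine card_mul_le_card_mul (fun K K' => K' ⊆ K) (fun K hK => ?_) (fun K' hK' => ?_)
  · simp only [collisionFree, mem_filter, mem_powersetCard] at hK
    calc j + 1 = #(K.powersetCard j) := by
          rw [card_powersetCard, hK.1.2, Nat.choose_succ_self_right]
      _ ≤ _ := card_le_card fun K' hK' => by
        rw [mem_powersetCard] at hK'
        simp only [bipartiteAbove, collisionFree, mem_filter, mem_powersetCard]
        exact ⟨⟨⟨subset_univ _, hK'.2⟩, hK.2.mono (coe_subset.2 hK'.1)⟩, hK'.1⟩
  · simp only [collisionFree, mem_filter, mem_powersetCard] at hK'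
    rw [← hK'.1.2, ← card_filter_notMem_image hF hK'.2]
    refine card_le_card_of_surjOn (insert · K') fun K hK => ?_
    simp only [coe_filter, bipartiteBelow, collisionFree, mem_filter, mem_powersetCard] at hK
    obtain ⟨x, hxK', rfl⟩ := exists_eq_insert_iff.2 ⟨hK.2, by rw [hK.1.1.2, hK'.1.2]⟩
    refine ⟨x, ?_, rfl⟩
    simp only [coe_filter, mem_univ, true_and, mem_image, not_exists, not_and]
    intro x' hx' hFx
    exact hxK' (hK.1.2 (by simp [hx']) (by simp) hFx ▸ hx')

lemma card_collisionFree_mul_factorial_le [DecidableEq X]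
    (hF : HasFiberCard F d) :
    ∀ k, #(collisionFree F k) * k ! ≤ d ^ k * (#(univ.image F)).descFactorial k
  | 0 => by
    simp only [Nat.factorial_zero, mul_one, pow_zero, Nat.descFactorial_zero]
    exact (card_filter_le _ _).trans (by simp)
  | k + 1 => by
    set m := #(univ.image F)
    calc #(collisionFree F (k + 1)) * (k + 1)!
        = #(collisionFree F (k + 1)) * (k + 1) * k ! := by rw [Nat.factorial_succ, mul_assoc]
      _ ≤ #(collisionFree F k) * (d * (m - k)) * k ! :=
        Nat.mul_le_mul_right _ (card_collisionFree_succ_mul_le hF k)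
      _ = d * (m - k) * (#(collisionFree F k) * k !) := by ring
      _ ≤ d * (m - k) * (d ^ k * m.descFactorial k) :=
        Nat.mul_le_mul_left _ (card_collisionFree_mul_factorial_le hF k)
      _ = d ^ (k + 1) * m.descFactorial (k + 1) := by rw [Nat.descFactorial_succ]; ring

lemma card_collisionFree_div_card_powersetCard_le [DecidableEq X]
    (hF : HasFiberCard F d) (k : ℕ) :
    (#(collisionFree F k) : ℝ) / #(univ.powersetCard k : Finset (Finset X)) ≤
      d ^ k * (#(univ.image F)).descFactorial k / (Fintype.card X).descFactorial k := by
  rw [card_powersetCard, card_univ]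
  calc (#(collisionFree F k) : ℝ) / (Fintype.card X).choose k
      = #(collisionFree F k) * k ! / ((Fintype.card X).choose k * k !) :=
        (mul_div_mul_right _ _ (by positivity)).symm
    _ ≤ d ^ k * (#(univ.image F)).descFactorial k / ((Fintype.card X).choose k * k !) := by
        gcongr ?_ / _
        exact_mod_cast card_collisionFree_mul_factorial_le hF k
    _ = _ := by
        rw [Nat.descFactorial_eq_factorial_mul_choose (Fintype.card X), Nat.cast_mul,
          mul_comm (k ! : ℝ)]

end Fibers

lemma prod_range_one_sub_div_sub_eq {N m k : ℕ} (hN : N = 2 * m) (hk : k ≤ N) :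
    ∏ i ∈ range k, (1 - (i : ℝ) / (N - i)) =
      2 ^ k * m.descFactorial k / N.descFactorial k := by
  induction k with
  | zero => simp
  | succ k ih =>
    rcases lt_or_ge k m with hkm | hmk
    · have hNk : (N : ℝ) - k ≠ 0 := by rw [sub_ne_zero]; exact_mod_cast (by omega : N ≠ k)
      rw [prod_range_succ, ih (by omega), Nat.descFactorial_succ, Nat.descFactorial_succ,
        Nat.cast_mul, Nat.cast_mul, Nat.cast_sub hkm.le, Nat.cast_sub (by omega)]
      rw [hN, Nat.cast_mul, Nat.cast_two] at hNk ⊢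
      field_simp
      ring
    · -- both sides vanish: on the right `m - k = 0`, on the left the factor `i = m` is `1 - m / m`
      have hm : (m : ℝ) ≠ 0 := by exact_mod_cast (by omega : m ≠ 0)
      rw [Nat.descFactorial_succ, Nat.sub_eq_zero_of_le hmk, zero_mul, Nat.cast_zero, mul_zero,
        zero_div]
      refine prod_eq_zero (mem_range.2 (Nat.lt_succ_of_le hmk)) ?_
      rw [hN, Nat.cast_mul, Nat.cast_two, two_mul, add_sub_cancel_right, div_self hm, sub_self]

lemma prod_range_one_sub_div_le_pow {a : ℝ} (ha : 0 ≤ a) {k : ℕ} (hk : (k : ℝ) - 1 ≤ a) :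
    ∏ i ∈ range k, (1 - i / a) ≤ (1 - (k - 1) / (2 * a)) ^ k := by
  set g : ℕ → ℝ := fun i => 1 - i / a
  set c : ℝ := 1 - (k - 1) / (2 * a)
  have hg : ∀ i ∈ range k, 0 ≤ g i := fun i hi => by
    have : (i : ℝ) ≤ k - 1 := by
      rw [le_sub_iff_add_le]; exact_mod_cast mem_range.1 hi
    exact sub_nonneg.2 (div_le_one_of_le₀ (this.trans hk) ha)
  have hc : 0 ≤ c := sub_nonneg.2 (div_le_one_of_le₀ (by linarith) (by positivity))
  have hpair : ∀ i ∈ range k, g i * g (k - 1 - i) ≤ c ^ 2 := fun i hi => by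
    have hsum : g i + g (k - 1 - i) = 2 * c := by
      have hcast : ((k - 1 - i : ℕ) : ℝ) = k - 1 - i := by
        rw [Nat.sub_sub, Nat.cast_sub (by simp at hi; omega)]; push_cast; ring
      simp only [g, c, hcast]
      ring
    nlinarith [sq_nonneg (g i - g (k - 1 - i))]
  have hsq : (∏ i ∈ range k, g i) ^ 2 ≤ (c ^ k) ^ 2 :=
    calc (∏ i ∈ range k, g i) ^ 2 = ∏ i ∈ range k, g i * g (k - 1 - i) := by
          rw [prod_mul_distrib, prod_range_reflect g k, sq]
      _ ≤ ∏ _i ∈ range k, c ^ 2 :=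
          prod_le_prod (fun i hi => mul_nonneg (hg i hi) (hg _ (by simp at hi ⊢; omega))) hpair
      _ = (c ^ k) ^ 2 := by rw [prod_const, card_range, ← pow_mul, ← pow_mul, mul_comm]
  exact (abs_le_of_sq_le_sq hsq (by positivity)).trans' (le_abs_self _)

lemma prod_range_one_sub_div_sub_le_pow {N k : ℕ} (hk : 2 * k ≤ N) :
    ∏ i ∈ range k, (1 - (i : ℝ) / (N - i)) ≤ (1 - ((k : ℝ) - 1) / (2 * N)) ^ (k - 1) := by
  rcases Nat.eq_zero_or_pos k with rfl | hk0
  · simp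
  have hkN : (k : ℝ) - 1 ≤ N := by
    have : (k : ℝ) ≤ N := by exact_mod_cast (by omega : k ≤ N)
    linarith
  calc ∏ i ∈ range k, (1 - (i : ℝ) / (N - i))
      ≤ ∏ i ∈ range k, (1 - (i : ℝ) / N) := by
        refine prod_le_prod (fun i hi => ?_) (fun i hi => ?_)
        all_goals
          have h2i : 2 * (i : ℝ) + 2 ≤ N := by
            exact_mod_cast (by simp at hi; omega : 2 * i + 2 ≤ N)
        · exact sub_nonneg.2 (div_le_one_of_le₀ (by linarith) (by linarith))
        · gcongr <;> linarith
    _ ≤ (1 - ((k : ℝ) - 1) / (2 * N)) ^ k :=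
        prod_range_one_sub_div_le_pow (Nat.cast_nonneg N) hkN
    _ ≤ (1 - ((k : ℝ) - 1) / (2 * N)) ^ (k - 1) := by
        have hk1 : (1 : ℝ) ≤ k := by exact_mod_cast hk0
        refine pow_le_pow_of_le_one ?_ ?_ (Nat.sub_le k 1)
        · exact sub_nonneg.2 (div_le_one_of_le₀ (by linarith) (by positivity))
        · exact sub_le_self _ (by positivity)

theorem twoToOne_random_subset_no_collision_prob {X Y : Type*} [Fintype X] [DecidableEq X]
    [DecidableEq Y] (F : X → Y)
    (hF : ∀ y ∈ Finset.image F Finset.univ,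
      (Finset.univ.filter (fun x => F x = y)).card = 2)
    (N k : ℕ) (hN : Fintype.card X = N) (hk : k ≤ N) :
    (((Finset.univ.powersetCard k).filter
        (fun K : Finset X => Set.InjOn F (K : Set X))).card : ℝ) /
      ((Finset.univ.powersetCard k) : Finset (Finset X)).card ≤
      ∏ i ∈ Finset.range k, (1 - (i : ℝ) / ((N : ℝ) - i)) ∧
    ∏ i ∈ Finset.range k, (1 - (i : ℝ) / ((N : ℝ) - i)) ≤
      (1 - ((k : ℝ) - 1) / (2 * N)) ^ (k - 1) := by
  set m := #(univ.image F)
  have hNm : N = 2 * m := hN ▸ card_eq_mul_card_image hF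
  have hprod := prod_range_one_sub_div_sub_eq hNm hk
  refine ⟨?_, ?_⟩
  · rw [hprod, ← hN]
    exact_mod_cast card_collisionFree_div_card_powersetCard_le hF k
  · rcases le_or_gt k m with hkm | hmk
    · exact prod_range_one_sub_div_sub_le_pow (by omega)
    · rw [hprod, Nat.descFactorial_eq_zero_iff_lt.2 hmk, Nat.cast_zero, mul_zero, zero_div]
      have hkN : (k : ℝ) - 1 ≤ 2 * N := by
        have : (k : ℝ) ≤ N := by exact_mod_cast hk
        linarith [Nat.cast_nonneg (α := ℝ) N]
      exact pow_nonneg (sub_nonneg.2 (div_le_one_of_le₀ hkN (by positivity))) _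
end

section
/- Let F : X → Y be two-to-one with |X| = N, and let K be a uniformly random k-element subset of X with k = ⌈c√N⌉ for a constant c ≥ 1.18 (and k ≤ N). Then the probability that K contains a collision is at least 1/2, for all sufficiently large N. -/
open Finset

private lemma cast_descFactorial_eq {n k : ℕ} (h : k ≤ n) :
    (n.descFactorial k : ℝ) = ∏ i ∈ range k, ((n : ℝ) - i) := by
  rw [Nat.descFactorial_eq_prod_range, Nat.cast_prod]
  refine prod_congr rfl fun i hi => ?_
  have hi' : i < n := lt_of_lt_of_le (mem_range.1 hi) h
  rw [Nat.cast_sub hi'.le]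

private lemma free_count_le {X Y : Type} [Fintype X] [DecidableEq X] [DecidableEq Y]
    (F : X → Y)
    (h2 : ∀ y ∈ Finset.image F Finset.univ,
        (Finset.univ.filter (fun x => F x = y)).card = 2)
    (k : ℕ) :
    ((Finset.univ.powersetCard k).filter
        (fun K : Finset X => ¬ ∃ x₀ ∈ K, ∃ x₁ ∈ K, x₀ ≠ x₁ ∧ F x₀ = F x₁)).card
      ≤ 2 ^ k * ((Finset.image F Finset.univ).card.choose k) := by
  classical
  letI : LinearOrder X := LinearOrder.lift' (Fintype.equivFin X) (Equiv.injective _)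
  set s := ((Finset.univ.powersetCard k).filter
      (fun K : Finset X => ¬ ∃ x₀ ∈ K, ∃ x₁ ∈ K, x₀ ≠ x₁ ∧ F x₀ = F x₁)) with hs
  have hmem : ∀ K ∈ s, K.card = k ∧ ∀ x₀ ∈ K, ∀ x₁ ∈ K, F x₀ = F x₁ → x₀ = x₁ := by
    intro K hK
    rw [hs, mem_filter, mem_powersetCard] at hK
    refine ⟨hK.1.2, fun x₀ h₀ x₁ h₁ hF => ?_⟩
    by_contra hne
    exact hK.2 ⟨x₀, h₀, x₁, h₁, hne, hF⟩
  have hmaps : ∀ K ∈ s, K.image F ∈ (Finset.image F Finset.univ).powersetCard k := by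
    intro K hK
    rw [mem_powersetCard]
    constructor
    · exact image_subset_image (subset_univ K)
    · rw [Finset.card_image_of_injOn]
      · exact (hmem K hK).1
      · intro x₀ h₀ x₁ h₁ hF
        exact (hmem K hK).2 x₀ h₀ x₁ h₁ hF
  have hbound : ∀ S ∈ (Finset.image F Finset.univ).powersetCard k,
      (s.filter (fun K => K.image F = S)).card ≤ 2 ^ k := by
    intro S hS
    rw [mem_powersetCard] at hS
    -- inject into functions S → Bool
    have hcard : (Finset.univ : Finset (↥S → Bool)).card = 2 ^ k := by
      rw [Finset.card_univ]
      simp [hS.2]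
    rw [← hcard]
    refine Finset.card_le_card_of_injOn
      (fun K => fun y : ↥S =>
        decide (∃ x, F x = (y : Y) ∧ (∀ z, F z = (y : Y) → x ≤ z) ∧ x ∈ K))
      (fun _ _ => mem_univ _) ?_
    intro K₁ hK₁ K₂ hK₂ hφ
    simp only [coe_filter, Set.mem_setOf_eq] at hK₁ hK₂
    -- symmetric subset claim
    have key : ∀ (A B : Finset X), A ∈ s → B ∈ s → A.image F = S → B.image F = S →
        ((fun y : ↥S =>
          decide (∃ x, F x = (y : Y) ∧ (∀ z, F z = (y : Y) → x ≤ z) ∧ x ∈ A)) =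
         (fun y : ↥S =>
          decide (∃ x, F x = (y : Y) ∧ (∀ z, F z = (y : Y) → x ≤ z) ∧ x ∈ B))) →
        A ⊆ B := by
      intro A B hA hB hAS hBS hfun x hx
      have hyS : F x ∈ S := by
        rw [← hAS]; exact mem_image_of_mem F hx
      set y : Y := F x with hy
      -- the fiber of y
      set t : Finset X := Finset.univ.filter (fun z => F z = y) with ht
      have htc : t.card = 2 := by
        apply h2
        rw [← hAS] at hyS
        exact (image_subset_image (subset_univ A)) hyS
      have htne : t.Nonempty := by
        rw [← Finset.card_pos, htc]; norm_num
      set a : X := t.min' htne with ha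
      have hat : a ∈ t := t.min'_mem htne
      have haF : F a = y := (mem_filter.1 hat).2
      have hamin : ∀ z, F z = y → a ≤ z := by
        intro z hz
        exact t.min'_le z (mem_filter.2 ⟨mem_univ z, hz⟩)
      -- the decided propositions are equivalent to a ∈ ·
      have hiff : ∀ C : Finset X,
          (∃ x', F x' = y ∧ (∀ z, F z = y → x' ≤ z) ∧ x' ∈ C) ↔ a ∈ C := by
        intro C
        constructor
        · rintro ⟨x', hx'F, hx'min, hx'C⟩
          have : x' = a := le_antisymm (hx'min a haF) (hamin x' hx'F)
          rwa [← this]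
        · intro haC; exact ⟨a, haF, hamin, haC⟩
      have hdec : (a ∈ A) ↔ (a ∈ B) := by
        have := congrFun hfun ⟨y, hyS⟩
        simp only [decide_eq_decide] at this
        rw [hiff A, hiff B] at this
        exact this
      by_cases hxa : x = a
      · rw [hxa] at hx ⊢
        exact hdec.1 hx
      · -- a ∉ A since A is collision-free and x ∈ A with F x = F a
        have haA : a ∉ A := by
          intro haA
          exact hxa ((hmem A hA).2 x hx a haA (by rw [haF]))
        have haB : a ∉ B := fun h => haA (hdec.2 h)
        -- y ∈ S = image F B, so some x₂ ∈ B with F x₂ = y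
        have : y ∈ B.image F := by rw [hBS]; exact hyS
        obtain ⟨x₂, hx₂B, hx₂F⟩ := mem_image.1 this
        have hx₂t : x₂ ∈ t := mem_filter.2 ⟨mem_univ _, hx₂F⟩
        have hxt : x ∈ t := mem_filter.2 ⟨mem_univ _, rfl⟩
        -- t has card 2 and contains a, x, x₂ with x ≠ a, x₂ ≠ a
        have hx₂a : x₂ ≠ a := fun h => haB (h ▸ hx₂B)
        have hsub : {a, x} ⊆ t := by
          intro z hz
          rcases mem_insert.1 hz with h | h
          · rwa [h]
          · rw [mem_singleton.1 h]; exact hxt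
        have hcard2 : ({a, x} : Finset X).card = 2 := by
          rw [card_insert_of_notMem (by simp [Ne.symm hxa]), card_singleton]
        have hteq : t = {a, x} := (Finset.eq_of_subset_of_card_le hsub (by omega)).symm
        have : x₂ ∈ ({a, x} : Finset X) := hteq ▸ hx₂t
        rcases mem_insert.1 this with h | h
        · exact absurd h hx₂a
        · rw [mem_singleton.1 h] at hx₂B
          exact hx₂B
    exact Finset.Subset.antisymm
      (key K₁ K₂ hK₁.1 hK₂.1 hK₁.2 hK₂.2 hφ)
      (key K₂ K₁ hK₂.1 hK₁.1 hK₂.2 hK₁.2 hφ.symm)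
  calc s.card ≤ 2 ^ k * ((Finset.image F Finset.univ).powersetCard k).card :=
        Finset.card_le_mul_card_image_of_maps_to hmaps (2 ^ k) hbound
    _ = 2 ^ k * ((Finset.image F Finset.univ).card.choose k) := by
        rw [Finset.card_powersetCard]

private lemma arith_bound (c : ℝ) (hc : c ≥ 1.18) (N m k : ℕ)
    (hNm : N = 2 * m) (hN : 160000 ≤ N)
    (hk : c * Real.sqrt N ≤ k) :
    2 * (2 ^ k * m.choose k) ≤ N.choose k := by
  by_cases hkm : k ≤ m
  swap
  · rw [Nat.choose_eq_zero_of_lt (not_le.1 hkm)]; simp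
  -- real preliminaries
  have hN0 : (0:ℝ) < N := by
    have : (160000:ℝ) ≤ N := by exact_mod_cast hN
    linarith
  have hs : (400:ℝ) ≤ Real.sqrt N := by
    have : Real.sqrt 160000 ≤ Real.sqrt N := by
      apply Real.sqrt_le_sqrt; exact_mod_cast hN
    have h400 : Real.sqrt 160000 = 400 := by
      rw [show (160000:ℝ) = 400 ^ 2 by norm_num, Real.sqrt_sq (by norm_num)]
    linarith
  have hsq : Real.sqrt N ^ 2 = N := Real.sq_sqrt hN0.le
  have hcs : (472:ℝ) ≤ c * Real.sqrt N := by nlinarith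
  have hk1 : (472:ℝ) ≤ (k:ℝ) := le_trans hcs hk
  have hlog : Real.log 2 * (2 * (N:ℝ)) ≤ (k:ℝ) * ((k:ℝ) - 1) := by
    have l2 : Real.log 2 < 0.6931471808 := Real.log_two_lt_d9
    have l2' : (0:ℝ) < Real.log 2 := Real.log_pos (by norm_num)
    have h1 : c * Real.sqrt N * (c * Real.sqrt N - 1) ≤ (k:ℝ) * ((k:ℝ) - 1) := by
      nlinarith
    have h2 : Real.log 2 * (2 * (N:ℝ)) ≤ c * Real.sqrt N * (c * Real.sqrt N - 1) := by
      nlinarith [sq_nonneg (c - 1.18), Real.sqrt_nonneg (N:ℝ), sq_nonneg (Real.sqrt N - 400)]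
    linarith
  -- reduce to descending factorials
  have hkN : k ≤ N := by omega
  have key : (2:ℝ) * (2 ^ k * (m.descFactorial k : ℝ)) ≤ (N.descFactorial k : ℝ) := by
    rw [cast_descFactorial_eq hkm, cast_descFactorial_eq hkN]
    have hconst : (2:ℝ) ^ k * ∏ i ∈ range k, ((m:ℝ) - i)
        = ∏ i ∈ range k, (2 * ((m:ℝ) - i)) := by
      rw [prod_mul_distrib, prod_const, card_range]
    rw [hconst]
    have hNm' : (N:ℝ) = 2 * m := by exact_mod_cast hNm
    have hstep : ∀ i ∈ range k,
        2 * ((m:ℝ) - i) ≤ ((N:ℝ) - i) * Real.exp (-((i:ℝ)/N)) := by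
      intro i hi
      have him : (i:ℝ) + 1 ≤ m := by
        have : i + 1 ≤ m := le_trans (mem_range.1 hi) hkm
        exact_mod_cast this
      have hNi : (0:ℝ) < (N:ℝ) - i := by rw [hNm']; linarith
      have hexp : 1 - (i:ℝ)/N ≤ Real.exp (-((i:ℝ)/N)) := by
        have := Real.add_one_le_exp (-((i:ℝ)/N))
        linarith
      have heq : ((N:ℝ) - i) * (1 - (i:ℝ)/N) = (N:ℝ) - 2*i + (i:ℝ)^2/N := by
        field_simp
        ring
      have h3 : (N:ℝ) - 2*i ≤ ((N:ℝ) - i) * (1 - (i:ℝ)/N) := by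
        rw [heq]
        have : (0:ℝ) ≤ (i:ℝ)^2/N := by positivity
        linarith
      have h4 : ((N:ℝ) - i) * (1 - (i:ℝ)/N) ≤ ((N:ℝ) - i) * Real.exp (-((i:ℝ)/N)) :=
        mul_le_mul_of_nonneg_left hexp hNi.le
      have : 2 * ((m:ℝ) - i) = (N:ℝ) - 2*i + (0:ℝ) := by rw [hNm']; ring
      linarith
    have hnonneg : ∀ i ∈ range k, (0:ℝ) ≤ 2 * ((m:ℝ) - i) := by
      intro i hi
      have : (i:ℝ) + 1 ≤ m := by
        exact_mod_cast le_trans (mem_range.1 hi) hkm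
      linarith
    have hprod : ∏ i ∈ range k, (2 * ((m:ℝ) - i))
        ≤ ∏ i ∈ range k, (((N:ℝ) - i) * Real.exp (-((i:ℝ)/N))) :=
      Finset.prod_le_prod hnonneg hstep
    have hre : ∏ i ∈ range k, (((N:ℝ) - i) * Real.exp (-((i:ℝ)/N)))
        = (∏ i ∈ range k, ((N:ℝ) - i)) * Real.exp (∑ i ∈ range k, -((i:ℝ)/N)) := by
      rw [prod_mul_distrib, Real.exp_sum]
    rw [hre] at hprod
    have hsum : ∑ i ∈ range k, -((i:ℝ)/N) = -((k:ℝ) * ((k:ℝ)-1) / 2) / N := by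
      have hgauss : (∑ i ∈ range k, (i:ℝ)) = (k:ℝ) * ((k:ℝ)-1) / 2 := by
        have h := Finset.sum_range_id_mul_two k
        have hcast : ((∑ i ∈ range k, i : ℕ) : ℝ) * 2 = (k:ℝ) * ((k:ℝ) - 1) := by
          have hk1' : 1 ≤ k := by
            have : (1:ℝ) ≤ (k:ℝ) := by linarith
            exact_mod_cast this
          rw [← Nat.cast_ofNat, ← Nat.cast_mul, h, Nat.cast_mul, Nat.cast_sub hk1']
          norm_num
        push_cast at hcast ⊢
        linarith
      rw [Finset.sum_neg_distrib, ← Finset.sum_div, hgauss, neg_div]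
    have hexp2 : Real.exp (∑ i ∈ range k, -((i:ℝ)/N)) ≤ 1/2 := by
      rw [hsum, show (1/2:ℝ) = Real.exp (Real.log (1/2)) by
        rw [Real.exp_log]; norm_num]
      apply Real.exp_le_exp.2
      rw [show Real.log (1/2) = -Real.log 2 by
        rw [one_div, Real.log_inv]]
      rw [neg_div, neg_le_neg_iff, le_div_iff₀ hN0]
      linarith
    have hprodN : (0:ℝ) ≤ ∏ i ∈ range k, ((N:ℝ) - i) := by
      apply Finset.prod_nonneg
      intro i hi
      have : (i:ℝ) + 1 ≤ N := by
        exact_mod_cast le_trans (mem_range.1 hi) hkN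
      linarith
    nlinarith [hprod, hexp2, hprodN, Real.exp_pos (∑ i ∈ range k, -((i:ℝ)/N))]
  have keyN : 2 * (2 ^ k * m.descFactorial k) ≤ N.descFactorial k := by
    exact_mod_cast key
  rw [Nat.descFactorial_eq_factorial_mul_choose, Nat.descFactorial_eq_factorial_mul_choose]
    at keyN
  have hfin : Nat.factorial k * (2 * (2 ^ k * m.choose k)) ≤ Nat.factorial k * N.choose k := by
    calc Nat.factorial k * (2 * (2 ^ k * m.choose k))
        = 2 * (2 ^ k * (Nat.factorial k * m.choose k)) := by ring
      _ ≤ Nat.factorial k * N.choose k := keyN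
  exact Nat.le_of_mul_le_mul_left hfin (Nat.factorial_pos k)

theorem twoToOne_birthday_collision_prob (c : ℝ) (hc : c ≥ 1.18) :
    ∃ N₀ : ℕ, ∀ (X Y : Type) [Fintype X] [DecidableEq X] [DecidableEq Y]
      (F : X → Y) (N : ℕ), Fintype.card X = N → N ≥ N₀ →
      (∀ y ∈ Finset.image F Finset.univ,
        (Finset.univ.filter (fun x => F x = y)).card = 2) →
      ∀ k : ℕ, k = ⌈c * Real.sqrt N⌉₊ → k ≤ N →
      (((Finset.univ.powersetCard k).filter
          (fun K : Finset X => ∃ x₀ ∈ K, ∃ x₁ ∈ K, x₀ ≠ x₁ ∧ F x₀ = F x₁)).card : ℝ) /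
        ((Finset.univ.powersetCard k) : Finset (Finset X)).card ≥ 1 / 2 := by
  classical
  refine ⟨160000, ?_⟩
  intro X Y _ _ _ F N hN hNlarge h2 k hk hkN
  set m := (Finset.image F Finset.univ).card with hm
  have hNm : N = 2 * m := by
    have h := Finset.card_eq_sum_card_image F (Finset.univ : Finset X)
    rw [Finset.card_univ, hN] at h
    rw [h, Finset.sum_congr rfl h2, Finset.sum_const, smul_eq_mul, mul_comm]
  -- total count
  have htotal : ((Finset.univ : Finset X).powersetCard k).card = N.choose k := by
    rw [Finset.card_powersetCard, Finset.card_univ, hN]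
  have htotal_pos : 0 < N.choose k := Nat.choose_pos hkN
  -- split into collision / free
  have hsplit :
      ((Finset.univ.powersetCard k).filter
          (fun K : Finset X => ∃ x₀ ∈ K, ∃ x₁ ∈ K, x₀ ≠ x₁ ∧ F x₀ = F x₁)).card
        + ((Finset.univ.powersetCard k).filter
          (fun K : Finset X => ¬ ∃ x₀ ∈ K, ∃ x₁ ∈ K, x₀ ≠ x₁ ∧ F x₀ = F x₁)).card
        = N.choose k := by
    rw [← htotal]
    exact Finset.card_filter_add_card_filter_not _
  have hfree := free_count_le F h2 k
  rw [← hm] at hfree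
  have hk' : c * Real.sqrt N ≤ k := by
    rw [hk]; exact Nat.le_ceil _
  have harith := arith_bound c hc N m k hNm hNlarge hk'
  have h2f : 2 * ((Finset.univ.powersetCard k).filter
      (fun K : Finset X => ¬ ∃ x₀ ∈ K, ∃ x₁ ∈ K, x₀ ≠ x₁ ∧ F x₀ = F x₁)).card
      ≤ N.choose k := le_trans (Nat.mul_le_mul_left 2 hfree) harith
  have hcoll : N.choose k ≤ 2 * ((Finset.univ.powersetCard k).filter
      (fun K : Finset X => ∃ x₀ ∈ K, ∃ x₁ ∈ K, x₀ ≠ x₁ ∧ F x₀ = F x₁)).card := by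
    omega
  rw [htotal, ge_iff_le, le_div_iff₀ (by exact_mod_cast htotal_pos)]
  have hcast : (N.choose k : ℝ) ≤ 2 * ((Finset.univ.powersetCard k).filter
      (fun K : Finset X => ∃ x₀ ∈ K, ∃ x₁ ∈ K, x₀ ≠ x₁ ∧ F x₀ = F x₁)).card := by
    exact_mod_cast hcoll
  linarith
end
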